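/- Let ε > 0, μ > 0, σ > 0 and δ ∈ (0,1) with κ_ε(μ/σ) ≤ δ, where κ_ε(s) = Φ(s/2 − ε/s) − e^ε Φ(−s/2 − ε/s) and Φ is the standard normal CDF. Let m be a positive integer and let η be a random vector in ℝ^m with independent coordinates each distributed as N(0, σ²). Then for every pair θ, θ' ∈ ℝ^m that differ in at most one coordinate and satisfy ‖θ − θ'‖_1 ≤ μ, and for every Borel set S ⊆ ℝ^m, P( θ + η ∈ S ) ≤ e^ε · P( θ' + η ∈ S ) + δ. -/

import Mathlib

open MeasureTheory ProbabilityTheory Finset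

/-- The standard normal cumulative distribution function
`Φ(s) = (1/√(2π)) ∫_{-∞}^s e^{-τ²/2} dτ`. -/
noncomputable def stdNormalCDF (s : ℝ) : ℝ :=
  (Real.sqrt (2 * Real.pi))⁻¹ * ∫ τ in Set.Iic s, Real.exp (-τ ^ 2 / 2)

/-- `κ_ε(s) = Φ(s/2 - ε/s) - e^ε Φ(-s/2 - ε/s)`. -/
noncomputable def kappa (ε s : ℝ) : ℝ :=
  stdNormalCDF (s / 2 - ε / s) - Real.exp ε * stdNormalCDF (-s / 2 - ε / s)

open scoped NNReal ENNReal

/-!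
For Gaussians `N(a, σ²)` and `N(b, σ²)` with `b < a`, the log-likelihood ratio
`log (p_a x / p_b x) = (a - b) (x - (a + b) / 2) / σ²` is increasing and affine in `x`, so
`p_a - e^ε p_b` is nonnegative exactly on a half-line `[T, ∞)`. Hence for every Borel set `A`,
`P_a(A) - e^ε P_b(A) ≤ P_a([T, ∞)) - e^ε P_b([T, ∞)) = κ_ε((a - b) / σ)`. The derivative of
`κ_ε` is the standard normal density at `s / 2 - ε / s`, so `κ_ε` is increasing on `(0, ∞)` and
the bound is at most `κ_ε(μ / σ) ≤ δ` whenever `|a - b| ≤ μ`; the case `a < b` follows by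
reflecting through the origin.

In dimension `m`, `θ + η` and `θ' + η` have product laws that differ in a single coordinate only,
and integrating the one-dimensional bound along that coordinate (Fubini) gives the claim.
-/

lemma stdNormalCDF_nonneg (s : ℝ) : 0 ≤ stdNormalCDF s :=
  mul_nonneg (inv_nonneg.2 (Real.sqrt_nonneg _)) (integral_nonneg fun _ => (Real.exp_pos _).le)

lemma stdNormalCDF_eq_setIntegral (s : ℝ) :
    stdNormalCDF s = ∫ τ in Set.Iic s, gaussianPDFReal 0 1 τ := by
  simp [stdNormalCDF, gaussianPDFReal, integral_const_mul]

lemma gaussianReal_zero_one_Iic (s : ℝ) :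
    gaussianReal 0 1 (Set.Iic s) = ENNReal.ofReal (stdNormalCDF s) := by
  rw [gaussianReal_apply_eq_integral 0 one_ne_zero, stdNormalCDF_eq_setIntegral]

lemma hasDerivAt_stdNormalCDF (u : ℝ) : HasDerivAt stdNormalCDF (gaussianPDFReal 0 1 u) u := by
  have hint := integrable_gaussianPDFReal 0 1
  have hcont : Continuous (gaussianPDFReal 0 1) := by
    rw [gaussianPDFReal_def]; fun_prop
  have hsplit : stdNormalCDF = fun s =>
      (∫ τ in Set.Iic 0, gaussianPDFReal 0 1 τ) + ∫ τ in (0 : ℝ)..s, gaussianPDFReal 0 1 τ := by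
    funext s
    rw [stdNormalCDF_eq_setIntegral,
      ← intervalIntegral.integral_Iic_sub_Iic hint.integrableOn hint.integrableOn]
    ring
  rw [hsplit]
  exact (intervalIntegral.integral_hasDerivAt_right hint.intervalIntegrable
    hcont.aestronglyMeasurable.stronglyMeasurableAtFilter hcont.continuousAt).const_add _

lemma gaussianPDFReal_eq_exp_mul (a b : ℝ) (v : ℝ≥0) (x : ℝ) :
    gaussianPDFReal a v x =
      Real.exp ((a - b) * (x - (a + b) / 2) / v) * gaussianPDFReal b v x := by
  rcases eq_or_ne v 0 with rfl | hv
  · simp [gaussianPDFReal_zero_var]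
  have hv' : (v : ℝ) ≠ 0 := by exact_mod_cast hv
  rw [gaussianPDFReal, gaussianPDFReal, mul_left_comm, ← Real.exp_add]
  congr 2
  field_simp
  ring

lemma hasDerivAt_kappa (ε : ℝ) {s : ℝ} (hs : s ≠ 0) :
    HasDerivAt (kappa ε) (gaussianPDFReal 0 1 (s / 2 - ε / s)) s := by
  have hpdf : Real.exp ε * gaussianPDFReal 0 1 (-s / 2 - ε / s) =
      gaussianPDFReal 0 1 (s / 2 - ε / s) := by
    simp only [gaussianPDFReal, NNReal.coe_one, mul_one]
    rw [mul_left_comm, ← Real.exp_add]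
    congr 2
    field_simp
    ring
  have hinv : HasDerivAt (fun u : ℝ => ε / u) (-(ε / s ^ 2)) s := by
    simpa [div_eq_mul_inv] using (hasDerivAt_inv hs).const_mul ε
  have ha := ((hasDerivAt_id s).div_const 2).sub hinv
  have hb := ((hasDerivAt_id s).neg.div_const 2).sub hinv
  have h : HasDerivAt (kappa ε) (gaussianPDFReal 0 1 (s / 2 - ε / s) * (1 / 2 - -(ε / s ^ 2)) -
      Real.exp ε * (gaussianPDFReal 0 1 (-s / 2 - ε / s) * (-1 / 2 - -(ε / s ^ 2)))) s :=
    ((hasDerivAt_stdNormalCDF _).comp s ha).sub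
      (((hasDerivAt_stdNormalCDF _).comp s hb).const_mul (Real.exp ε))
  convert h using 1
  rw [← mul_assoc, hpdf]
  ring

lemma kappa_monotoneOn (ε : ℝ) : MonotoneOn (kappa ε) (Set.Ioi 0) := by
  have hderiv : ∀ s ∈ Set.Ioi (0 : ℝ),
      HasDerivAt (kappa ε) (gaussianPDFReal 0 1 (s / 2 - ε / s)) s := fun s hs => hasDerivAt_kappa ε (ne_of_gt hs)
  refine monotoneOn_of_deriv_nonneg (convex_Ioi 0)
    (fun s hs => (hderiv s hs).continuousAt.continuousWithinAt)
    (fun s hs => (hderiv s (interior_subset hs)).differentiableAt.differentiableWithinAt)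
    (fun s hs => ?_)
  rw [(hderiv s (interior_subset hs)).deriv]
  exact gaussianPDFReal_nonneg _ _ _

lemma ne_zero_of_coe_eq_sq {σ : ℝ} (hσ : σ ≠ 0) {v : ℝ≥0} (hv : (v : ℝ) = σ ^ 2) : v ≠ 0 :=
  fun h => hσ (by simpa [h, eq_comm] using hv)

lemma setIntegral_gaussianPDFReal_Ici {σ : ℝ} (hσ : 0 < σ) {v : ℝ≥0} (hv : (v : ℝ) = σ ^ 2)
    (a T : ℝ) : ∫ x in Set.Ici T, gaussianPDFReal a v x = stdNormalCDF ((a - T) / σ) := by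
  have hv0 := ne_zero_of_coe_eq_sq hσ.ne' hv
  have hmap : (gaussianReal 0 1).map (fun x => a - σ * x) = gaussianReal a v := by
    rw [show (fun x => a - σ * x) = (a - ·) ∘ (σ * ·) from rfl,
      ← Measure.map_map (measurable_const_sub a) (measurable_const_mul σ),
      gaussianReal_map_const_mul, gaussianReal_map_const_sub]
    congr 1
    · ring
    · ext; simp [hv]
  have hpre : (fun x => a - σ * x) ⁻¹' Set.Ici T = Set.Iic ((a - T) / σ) := by
    ext x
    simp only [Set.mem_preimage, Set.mem_Ici, Set.mem_Iic, le_div_iff₀ hσ]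
    constructor <;> intro <;> linarith
  have h := gaussianReal_zero_one_Iic ((a - T) / σ)
  rw [← hpre, ← Measure.map_apply (by fun_prop) measurableSet_Ici, hmap,
    gaussianReal_apply_eq_integral _ hv0] at h
  exact (ENNReal.ofReal_eq_ofReal_iff
    (integral_nonneg fun x => gaussianPDFReal_nonneg _ _ _) (stdNormalCDF_nonneg _)).1 h

lemma setIntegral_le_setIntegral_of_nonneg_of_nonpos_compl {α : Type*} [MeasurableSpace α]
    {μ : Measure α} {f : α → ℝ} (hf : Integrable f μ) {s : Set α} (hs : MeasurableSet s)
    (hpos : ∀ x ∈ s, 0 ≤ f x) (hneg : ∀ x ∉ s, f x ≤ 0) {A : Set α} (hA : MeasurableSet A) :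
    ∫ x in A, f x ∂μ ≤ ∫ x in s, f x ∂μ := by
  rw [← integral_inter_add_sdiff hs hf.integrableOn]
  have hout : ∫ x in A \ s, f x ∂μ ≤ 0 :=
    setIntegral_nonpos (hA.diff hs) fun x hx => hneg x hx.2
  have hin : ∫ x in A ∩ s, f x ∂μ ≤ ∫ x in s, f x ∂μ :=
    setIntegral_mono_set hf.integrableOn
      ((ae_restrict_iff' hs).2 (ae_of_all _ hpos)) Set.inter_subset_right.eventuallyLE
  linarith

lemma setIntegral_gaussianPDFReal_le_exp_mul_add_kappa (ε : ℝ) {σ : ℝ} (hσ : 0 < σ)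
    {v : ℝ≥0} (hv : (v : ℝ) = σ ^ 2) {a b : ℝ} (hba : b < a) {A : Set ℝ}
    (hA : MeasurableSet A) :
    ∫ x in A, gaussianPDFReal a v x ≤
      Real.exp ε * (∫ x in A, gaussianPDFReal b v x) + kappa ε ((a - b) / σ) := by
  have hv0 := ne_zero_of_coe_eq_sq hσ.ne' hv
  have hab : 0 < a - b := sub_pos.2 hba
  set T := ε * σ ^ 2 / (a - b) + (a + b) / 2 with hT
  set f := fun x => gaussianPDFReal a v x - Real.exp ε * gaussianPDFReal b v x with hf
  have hint_a := integrable_gaussianPDFReal a v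
  have hint_b := (integrable_gaussianPDFReal b v).const_mul (Real.exp ε)
  have hsign : ∀ x, 0 ≤ f x ↔ T ≤ x := by
    intro x
    have hratio : ε ≤ (a - b) * (x - (a + b) / 2) / v ↔ T ≤ x := by
      rw [hv, le_div_iff₀ (by positivity), hT, ← le_sub_iff_add_le, div_le_iff₀ hab]
      constructor <;> intro <;> linarith
    simp only [hf, gaussianPDFReal_eq_exp_mul a b v x, ← sub_mul, sub_nonneg,
      mul_nonneg_iff_of_pos_right (gaussianPDFReal_pos b v x hv0), Real.exp_le_exp, hratio]
  have htail : ∫ x in Set.Ici T, f x = kappa ε ((a - b) / σ) := by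
    rw [integral_sub hint_a.integrableOn hint_b.integrableOn, integral_const_mul,
      setIntegral_gaussianPDFReal_Ici hσ hv, setIntegral_gaussianPDFReal_Ici hσ hv, kappa]
    congr 3 <;> (rw [hT]; field_simp; ring)
  have h : ∫ x in A, f x ≤ ∫ x in Set.Ici T, f x :=
    setIntegral_le_setIntegral_of_nonneg_of_nonpos_compl (hint_a.sub hint_b)
      measurableSet_Ici (fun x hx => (hsign x).2 hx)
      (fun x hx => le_of_lt (not_le.1 (mt (hsign x).1 hx))) hA
  rw [htail, integral_sub hint_a.integrableOn hint_b.integrableOn, integral_const_mul] at h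
  linarith

lemma le_ofReal_exp_mul_add {ε : ℝ} (hε : 0 ≤ ε) (x δ : ℝ≥0∞) :
    x ≤ ENNReal.ofReal (Real.exp ε) * x + δ :=
  le_add_right (le_mul_of_one_le_left' (ENNReal.one_le_ofReal.2 (Real.one_le_exp hε)))

lemma gaussianReal_le_exp_mul_add_kappa (ε : ℝ) {σ : ℝ} (hσ : 0 < σ) {v : ℝ≥0}
    (hv : (v : ℝ) = σ ^ 2) {a b : ℝ} (hba : b < a) {A : Set ℝ} (hA : MeasurableSet A) :
    gaussianReal a v A ≤ ENNReal.ofReal (Real.exp ε) * gaussianReal b v A +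
      ENNReal.ofReal (kappa ε ((a - b) / σ)) := by
  have hv0 := ne_zero_of_coe_eq_sq hσ.ne' hv
  rw [gaussianReal_apply_eq_integral _ hv0, gaussianReal_apply_eq_integral _ hv0,
    ← ENNReal.ofReal_mul (Real.exp_pos ε).le]
  exact (ENNReal.ofReal_le_ofReal
    (setIntegral_gaussianPDFReal_le_exp_mul_add_kappa ε hσ hv hba hA)).trans ENNReal.ofReal_add_le

lemma gaussianReal_le_exp_mul_add {ε μ σ δ : ℝ} (hε : 0 ≤ ε) (hσ : 0 < σ) {v : ℝ≥0}
    (hv : (v : ℝ) = σ ^ 2) (hκ : kappa ε (μ / σ) ≤ δ) {a b : ℝ} (hab : |a - b| ≤ μ)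
    {A : Set ℝ} (hA : MeasurableSet A) :
    gaussianReal a v A ≤ ENNReal.ofReal (Real.exp ε) * gaussianReal b v A + ENNReal.ofReal δ := by
  have of_lt : ∀ a b : ℝ, b < a → |a - b| ≤ μ → ∀ A : Set ℝ, MeasurableSet A →
      gaussianReal a v A ≤ ENNReal.ofReal (Real.exp ε) * gaussianReal b v A + ENNReal.ofReal δ := by
    intro a b hba hab A hA
    have hpos : 0 < a - b := sub_pos.2 hba
    rw [abs_of_pos hpos] at hab
    refine (gaussianReal_le_exp_mul_add_kappa ε hσ hv hba hA).trans ?_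
    gcongr
    refine (kappa_monotoneOn ε (div_pos hpos hσ) (div_pos (hpos.trans_le hab) hσ) ?_).trans hκ
    gcongr
  rcases lt_trichotomy b a with hba | rfl | hab'
  · exact of_lt a b hba hab A hA
  · exact le_ofReal_exp_mul_add hε _ _
  · have hneg : ∀ c, gaussianReal c v A = gaussianReal (-c) v ((fun x => -x) ⁻¹' A) := fun c => by
      rw [← gaussianReal_map_neg, Measure.map_apply measurable_neg (hA.preimage measurable_neg)]
      simp only [Set.preimage_preimage, neg_neg, Set.preimage_id']
    rw [hneg a, hneg b]
    exact of_lt (-a) (-b) (neg_lt_neg hab') (by rwa [neg_sub_neg, abs_sub_comm]) _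
      (hA.preimage measurable_neg)

lemma pi_le_mul_pi_add_of_eq_of_ne {n : ℕ} {α : Fin (n + 1) → Type*}
    [∀ i, MeasurableSpace (α i)] {μs νs : ∀ i, Measure (α i)}
    [∀ i, IsProbabilityMeasure (μs i)] [∀ i, IsProbabilityMeasure (νs i)] (i : Fin (n + 1))
    (heq : ∀ j, j ≠ i → μs j = νs j) {K δ : ℝ≥0∞} (hK : K ≠ ∞)
    (hi : ∀ A, MeasurableSet A → μs i A ≤ K * νs i A + δ) {s : Set (∀ j, α j)}
    (hs : MeasurableSet s) :
    Measure.pi μs s ≤ K * Measure.pi νs s + δ := by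
  set e := MeasurableEquiv.piFinSuccAbove α i
  set t := e.symm ⁻¹' s
  have ht : MeasurableSet t := hs.preimage e.symm.measurable
  have hrest : (fun j => μs (i.succAbove j)) = fun j => νs (i.succAbove j) :=
    funext fun j => heq _ (Fin.succAbove_ne i j)
  have hsplit : ∀ ρs : ∀ j, Measure (α j), [∀ j, IsProbabilityMeasure (ρs j)] →
      Measure.pi ρs s = ((ρs i).prod (Measure.pi fun j => ρs (i.succAbove j))) t := by
    intro ρs _
    rw [← (measurePreserving_piFinSuccAbove ρs i).map_eq, Measure.map_apply e.measurable ht,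
      ← Set.preimage_comp, e.symm_comp_self, Set.preimage_id]
  rw [hsplit μs, hsplit νs, Measure.prod_apply_symm ht, Measure.prod_apply_symm ht, ← hrest,
    ← lintegral_const_mul' _ _ hK]
  calc ∫⁻ y, μs i ((·, y) ⁻¹' t) ∂Measure.pi (fun j => μs (i.succAbove j))
      ≤ ∫⁻ y, (K * νs i ((·, y) ⁻¹' t) + δ) ∂Measure.pi (fun j => μs (i.succAbove j)) :=
        lintegral_mono fun y => hi _ (ht.preimage measurable_prodMk_right)
    _ = _ := by rw [lintegral_add_right _ measurable_const, lintegral_const, measure_univ, mul_one]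

lemma map_const_add_eq_pi_gaussianReal {ι Ω : Type*} [Fintype ι] [MeasurableSpace Ω]
    {P : Measure Ω} [IsProbabilityMeasure P] {η : Ω → ι → ℝ} {v : ℝ≥0}
    (hindep : iIndepFun (fun j ω => η ω j) P)
    (hlaw : ∀ j, P.map (fun ω => η ω j) = gaussianReal 0 v) (θ : ι → ℝ) :
    P.map (fun ω => θ + η ω) = Measure.pi fun j => gaussianReal (θ j) v := by
  have hmeas : ∀ j, AEMeasurable (fun ω => η ω j) P := fun j =>
    aemeasurable_of_map_neZero (by rw [hlaw j]; infer_instance)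
  have hη : P.map η = Measure.pi fun _ => gaussianReal 0 v := by
    rw [← funext hlaw]; exact hindep.map_fun_eq_pi_map hmeas
  have hshift : MeasurePreserving (fun x j => θ j + x j) (Measure.pi fun _ => gaussianReal 0 v)
      (Measure.pi fun j => gaussianReal (θ j) v) :=
    measurePreserving_pi _ _ (f := fun j x => θ j + x) fun j =>
      ⟨measurable_const_add _, by rw [gaussianReal_map_const_add, zero_add]⟩
  rw [← hshift.map_eq, ← hη, AEMeasurable.map_map_of_aemeasurable hshift.measurable.aemeasurable
    (aemeasurable_pi_lambda _ hmeas)]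
  rfl

theorem stmt13_general (ε μ σ δ : ℝ) (hε : 0 < ε) (hσ : 0 < σ)
    (hκ : kappa ε (μ / σ) ≤ δ)
    (m : ℕ)
    {Ω : Type*} [MeasurableSpace Ω] (P : Measure Ω) [IsProbabilityMeasure P]
    (η : Ω → Fin m → ℝ)
    (hindep : iIndepFun (fun j ω => η ω j) P)
    (hlaw : ∀ j, Measure.map (fun ω => η ω j) P = gaussianReal 0 ⟨σ ^ 2, sq_nonneg σ⟩)
    (θ θ' : Fin m → ℝ)
    (hadj0 : {j | θ j ≠ θ' j}.Subsingleton)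
    (hadj1 : ∑ j, |θ j - θ' j| ≤ μ)
    (S : Set (Fin m → ℝ)) (hS : MeasurableSet S) :
    P {ω | θ + η ω ∈ S} ≤
      ENNReal.ofReal (Real.exp ε) * P {ω | θ' + η ω ∈ S} + ENNReal.ofReal δ := by
  set v : ℝ≥0 := ⟨σ ^ 2, sq_nonneg σ⟩
  have hlawS : ∀ φ : Fin m → ℝ, P {ω | φ + η ω ∈ S} =
      Measure.pi (fun j => gaussianReal (φ j) v) S := fun φ => by
    have hmap := map_const_add_eq_pi_gaussianReal hindep hlaw φ
    rw [← hmap, Measure.map_apply_of_aemeasurable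
      (aemeasurable_of_map_neZero (by rw [hmap]; infer_instance)) hS]
    rfl
  rw [hlawS θ, hlawS θ']
  by_cases hθ : θ = θ'
  · subst hθ
    exact le_ofReal_exp_mul_add hε.le _ _
  obtain ⟨i, hi⟩ := Function.ne_iff.1 hθ
  obtain ⟨n, rfl⟩ := Nat.exists_eq_succ_of_ne_zero i.pos.ne'
  refine pi_le_mul_pi_add_of_eq_of_ne i (fun j hj => ?_) ENNReal.ofReal_ne_top
    (fun A hA => gaussianReal_le_exp_mul_add hε.le hσ rfl hκ ?_ hA) hS
  · exact congrArg (gaussianReal · v) (not_not.1 fun hne => hj (hadj0 hne hi))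
  · exact (single_le_sum (fun j _ => abs_nonneg (θ j - θ' j)) (mem_univ i)).trans hadj1

/-- Gaussian mechanism. Let `ε, μ, σ > 0` and `δ ∈ (0,1)` with
`κ_ε(μ/σ) ≤ δ`. Let `η` be a random vector in `ℝ^m` with independent coordinates, each
distributed as `N(0, σ²)`. Then for every pair `θ, θ'` that differ in at most one
coordinate and satisfy `‖θ - θ'‖₁ ≤ μ`, and every Borel set `S ⊆ ℝ^m`,
`P(θ + η ∈ S) ≤ e^ε P(θ' + η ∈ S) + δ`. -/
theorem stmt13 (ε μ σ δ : ℝ) (hε : 0 < ε) (hμ : 0 < μ) (hσ : 0 < σ)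
    (hδ : δ ∈ Set.Ioo (0 : ℝ) 1) (hκ : kappa ε (μ / σ) ≤ δ)
    (m : ℕ) (hm : 0 < m)
    {Ω : Type*} [MeasurableSpace Ω] (P : Measure Ω) [IsProbabilityMeasure P]
    (η : Ω → Fin m → ℝ)
    (hindep : iIndepFun (fun j ω => η ω j) P)
    (hlaw : ∀ j, Measure.map (fun ω => η ω j) P = gaussianReal 0 ⟨σ ^ 2, sq_nonneg σ⟩)
    (θ θ' : Fin m → ℝ)
    (hadj0 : {j | θ j ≠ θ' j}.Subsingleton)
    (hadj1 : ∑ j, |θ j - θ' j| ≤ μ)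
    (S : Set (Fin m → ℝ)) (hS : MeasurableSet S) :
    P {ω | θ + η ω ∈ S} ≤
      ENNReal.ofReal (Real.exp ε) * P {ω | θ' + η ω ∈ S} + ENNReal.ofReal δ :=
  stmt13_general ε μ σ δ hε hσ hκ m P η hindep hlaw θ θ' hadj0 hadj1 S hS
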